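/- arXiv:2404.09413 — 2 statements merged into one kernel-verified Lean document; each statement's English description precedes it below -/
import Mathlib

section
/- Let b > 0 and let X₁,…,X_n be i.i.d. random variables with the centered Laplace distribution Lap_1(0, b) (density (2b)⁻¹ exp(−|x|/b)). Then for every t ≥ 0, Pr[ |Σ_{i=1}^n X_i| ≥ t ] ≤ 2 exp( − t² / (2(4nb² + 2bt)) ). -/
open MeasureTheory Real

/-- The centered Laplace distribution on `ℝ` with scale parameter `b`,
given by density `(2b)⁻¹ exp(-|x|/b)` with respect to Lebesgue measure. -/
noncomputable def Lap1 (b : ℝ) : Measure ℝ :=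
  volume.withDensity (fun x => ENNReal.ofReal ((2 * b)⁻¹ * Real.exp (-|x| / b)))

namespace LapAux

open Set

noncomputable def lapd (b : ℝ) : ℝ → ℝ := fun x => (2 * b)⁻¹ * Real.exp (-|x| / b)

lemma lapd_nonneg {b : ℝ} (hb : 0 < b) (x : ℝ) : 0 ≤ lapd b x := by
  unfold lapd; positivity

lemma lapd_meas (b : ℝ) : Measurable (lapd b) := by
  unfold lapd; fun_prop

lemma lapd_meas' (b : ℝ) : Measurable fun x => (lapd b x).toNNReal :=
  (lapd_meas b).real_toNNReal

lemma lap1_eq (b : ℝ) :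
    Lap1 b = volume.withDensity (fun x => ((lapd b x).toNNReal : ENNReal)) := rfl

lemma integral_lap1 {b : ℝ} (hb : 0 < b) (g : ℝ → ℝ) :
    ∫ x, g x ∂(Lap1 b) = ∫ x, lapd b x * g x := by
  rw [lap1_eq, integral_withDensity_eq_integral_smul (lapd_meas' b) g]
  congr 1; ext x
  rw [NNReal.smul_def, Real.coe_toNNReal _ (lapd_nonneg hb x), smul_eq_mul]

lemma integrable_lap1 {b : ℝ} (hb : 0 < b) {g : ℝ → ℝ}
    (h : Integrable (fun x => lapd b x * g x) volume) : Integrable g (Lap1 b) := by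
  rw [lap1_eq]
  rw [integrable_withDensity_iff_integrable_smul (lapd_meas' b)]
  refine h.congr (Filter.Eventually.of_forall fun x => ?_)
  show lapd b x * g x = (lapd b x).toNNReal • g x
  rw [NNReal.smul_def, Real.coe_toNNReal _ (lapd_nonneg hb x), smul_eq_mul]

lemma exp_decay_integral (a : ℝ) (ha : 0 < a) :
    ∫ x in Ioi (0:ℝ), Real.exp (-(a * x)) = a⁻¹ := by
  have h := integral_comp_mul_left_Ioi (fun y => Real.exp (-y)) 0 ha
  simp only [mul_zero, integral_exp_neg_Ioi, neg_zero, Real.exp_zero, smul_eq_mul,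
    mul_one] at h
  exact h

lemma integrableOn_Iic_comp_neg {f : ℝ → ℝ}
    (h : IntegrableOn (fun x => f (-x)) (Ici (0:ℝ))) : IntegrableOn f (Iic (0:ℝ)) := by
  have m : MeasurableEmbedding fun x : ℝ => -x := (Homeomorph.neg ℝ).measurableEmbedding
  rw [show (volume : Measure ℝ) = Measure.map (fun x : ℝ => -x) volume from
    (Measure.map_neg_eq_self (volume : Measure ℝ)).symm, m.integrableOn_map_iff]
  simpa [Function.comp_def, neg_preimage, neg_Iic, neg_zero] using h

lemma lap_Ioi {b c : ℝ} (hb : 0 < b) (h : c < 1 / b) :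
    IntegrableOn (fun x => (2 * b)⁻¹ * Real.exp (c * x - |x| / b)) (Ioi 0) ∧
    ∫ x in Ioi (0:ℝ), (2 * b)⁻¹ * Real.exp (c * x - |x| / b) = (2 * b)⁻¹ * (1 / b - c)⁻¹ := by
  have ha : 0 < 1 / b - c := by linarith
  have heq : EqOn (fun x => (2 * b)⁻¹ * Real.exp (-((1 / b - c) * x)))
      (fun x => (2 * b)⁻¹ * Real.exp (c * x - |x| / b)) (Ioi 0) := by
    intro x hx
    simp only
    rw [abs_of_pos hx]
    congr 1
    ring_nf
  have hbase : IntegrableOn (fun x => (2 * b)⁻¹ * Real.exp (-((1 / b - c) * x))) (Ioi 0) := by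
    have h0 := (exp_neg_integrableOn_Ioi 0 ha).const_mul ((2 * b)⁻¹)
    simp only [neg_mul] at h0
    exact h0
  constructor
  · exact hbase.congr_fun heq measurableSet_Ioi
  · rw [← setIntegral_congr_fun measurableSet_Ioi heq, integral_const_mul,
      exp_decay_integral _ ha]

lemma lap1_exp_integral {b : ℝ} (c : ℝ) (hb : 0 < b) (h1 : c < 1 / b) (h2 : -c < 1 / b) :
    Integrable (fun x => Real.exp (c * x)) (Lap1 b) ∧
    ∫ x, Real.exp (c * x) ∂(Lap1 b) = (2 * b)⁻¹ * ((1 / b - c)⁻¹ + (1 / b + c)⁻¹) := by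
  set g : ℝ → ℝ := fun x => (2 * b)⁻¹ * Real.exp (c * x - |x| / b) with hg
  have hgeq : ∀ x, lapd b x * Real.exp (c * x) = g x := by
    intro x
    rw [hg]; unfold lapd
    simp only
    rw [mul_assoc, ← Real.exp_add]
    congr 2
    ring
  have hIoi := lap_Ioi hb h1
  have hneg : ∀ x : ℝ, g (-x) = (2 * b)⁻¹ * Real.exp ((-c) * x - |x| / b) := by
    intro x
    rw [hg]; simp only
    rw [abs_neg]
    ring_nf
  have hIoi' := lap_Ioi hb (show -c < 1 / b from h2)
  have hIicInt : IntegrableOn g (Iic 0) := by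
    apply integrableOn_Iic_comp_neg
    refine (Iff.mpr integrableOn_Ici_iff_integrableOn_Ioi ?_)
    exact hIoi'.1.congr_fun (fun x _ => (hneg x).symm) measurableSet_Ioi
  have hgint : Integrable g := by
    rw [← integrableOn_univ, ← Iic_union_Ioi (a := (0:ℝ))]
    exact hIicInt.union hIoi.1
  have hIic : ∫ x in Iic (0:ℝ), g x = (2 * b)⁻¹ * (1 / b + c)⁻¹ := by
    have := integral_comp_neg_Iic (0:ℝ) (fun y => g (-y))
    simp only [neg_neg, neg_zero] at this
    rw [this]
    have := hIoi'.2
    calc ∫ x in Ioi (0:ℝ), g (-x)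
        = ∫ x in Ioi (0:ℝ), (2 * b)⁻¹ * Real.exp ((-c) * x - |x| / b) := by
          exact setIntegral_congr_fun measurableSet_Ioi (fun x _ => hneg x)
      _ = (2 * b)⁻¹ * (1 / b - -c)⁻¹ := hIoi'.2
      _ = (2 * b)⁻¹ * (1 / b + c)⁻¹ := by ring_nf
  constructor
  · apply integrable_lap1 hb
    exact hgint.congr (Filter.Eventually.of_forall fun x => (hgeq x).symm)
  · rw [integral_lap1 hb]
    simp_rw [hgeq]
    rw [← intervalIntegral.integral_Iic_add_Ioi hIicInt hIoi.1, hIic, hIoi.2]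
    ring

lemma lap1_mgf (b c : ℝ) (hb : 0 < b) (hc : b * |c| ≤ 1 / 2) :
    Integrable (fun x => Real.exp (c * x)) (Lap1 b) ∧
    ∫ x, Real.exp (c * x) ∂(Lap1 b) ≤ Real.exp (2 * b ^ 2 * c ^ 2) := by
  have habs : |c| < 1 / b := by
    rw [lt_div_iff₀ hb]
    nlinarith [abs_nonneg c]
  have h1 : c < 1 / b := (le_abs_self c).trans_lt habs
  have h2 : -c < 1 / b := (neg_le_abs c).trans_lt habs
  obtain ⟨hint, hval⟩ := lap1_exp_integral c hb h1 h2
  refine ⟨hint, ?_⟩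
  rw [hval]
  have hu : b ^ 2 * c ^ 2 ≤ 1 / 4 := by
    have : (b * |c|) ^ 2 ≤ (1 / 2) ^ 2 := by
      apply pow_le_pow_left₀ (by positivity) hc
    calc b ^ 2 * c ^ 2 = (b * |c|) ^ 2 := by rw [mul_pow, sq_abs]
      _ ≤ (1 / 2) ^ 2 := this
      _ = 1 / 4 := by norm_num
  have hb1 : 0 < 1 / b - c := by linarith
  have hb2 : 0 < 1 / b + c := by linarith
  have hval2 : (2 * b)⁻¹ * ((1 / b - c)⁻¹ + (1 / b + c)⁻¹) = (1 - b ^ 2 * c ^ 2)⁻¹ := by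
    have hbb : b * (1 / b) = 1 := by field_simp
    have e1 : (0:ℝ) < 1 - b * c := by nlinarith [mul_pos hb hb1]
    have e2 : (0:ℝ) < 1 + b * c := by nlinarith [mul_pos hb hb2]
    have e3 : (0:ℝ) < 1 - b ^ 2 * c ^ 2 := by nlinarith [mul_pos e1 e2]
    have e1' : (1:ℝ) - b * c ≠ 0 := ne_of_gt e1
    have e2' : (1:ℝ) + b * c ≠ 0 := ne_of_gt e2
    have e3' : (1:ℝ) - b ^ 2 * c ^ 2 ≠ 0 := ne_of_gt e3
    have hbne : b ≠ 0 := hb.ne'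
    rw [show 1 / b - c = (1 - b * c) / b by field_simp <;> ring,
      show 1 / b + c = (1 + b * c) / b by field_simp <;> ring]
    field_simp
    ring
  rw [hval2]
  have h34 : 0 < 1 - b ^ 2 * c ^ 2 := by nlinarith
  have step1 : (1 - b ^ 2 * c ^ 2)⁻¹ ≤ 1 + 2 * b ^ 2 * c ^ 2 := by
    rw [inv_le_iff_one_le_mul₀ h34]
    nlinarith [sq_nonneg (b * c)]
  refine step1.trans ?_
  have := Real.add_one_le_exp (2 * b ^ 2 * c ^ 2)
  linarith

lemma lap1_prob {b : ℝ} (hb : 0 < b) : IsProbabilityMeasure (Lap1 b) := by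
  constructor
  obtain ⟨hint, hval⟩ := lap1_exp_integral (b := b) 0 hb (by positivity) (by simpa using (by positivity : (0:ℝ) < 1 / b))
  have hint1 : Integrable (fun _ : ℝ => (1:ℝ)) (Lap1 b) := by
    simpa using hint
  have hval1 : ∫ _ : ℝ, (1:ℝ) ∂(Lap1 b) = 1 := by
    have : ∫ x, Real.exp (0 * x) ∂(Lap1 b) = 1 := by
      rw [hval]
      field_simp
      ring
    simpa using this
  have h := ofReal_integral_eq_lintegral_ofReal hint1
      (Filter.Eventually.of_forall fun _ => zero_le_one)
  rw [hval1] at h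
  simp only [ENNReal.ofReal_one] at h
  rw [← lintegral_one, ← h]

lemma lap1_pi_exp (b : ℝ) (hb : 0 < b) (n : ℕ) (c : ℝ)
    (hint : Integrable (fun x => Real.exp (c * x)) (Lap1 b)) :
    Integrable (fun x : Fin n → ℝ => Real.exp (c * ∑ i, x i)) (Measure.pi fun _ => Lap1 b) ∧
    ∫ x : Fin n → ℝ, Real.exp (c * ∑ i, x i) ∂(Measure.pi fun _ => Lap1 b)
      = (∫ x, Real.exp (c * x) ∂(Lap1 b)) ^ n := by
  letI : MeasureSpace ℝ := ⟨Lap1 b⟩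
  haveI : IsProbabilityMeasure (volume : Measure ℝ) := lap1_prob hb
  have hexp : ∀ x : Fin n → ℝ, Real.exp (c * ∑ i, x i) = ∏ i, Real.exp (c * x i) := by
    intro x
    rw [Finset.mul_sum, Real.exp_sum]
  constructor
  · have h := Integrable.fintype_prod (𝕜 := ℝ)
      (f := fun _ : Fin n => fun x : ℝ => Real.exp (c * x)) (fun _ => hint)
    have h2 : Integrable (fun x : Fin n → ℝ => Real.exp (c * ∑ i, x i))
        (volume : Measure (Fin n → ℝ)) := by
      refine h.congr (Filter.Eventually.of_forall fun x => ?_)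
      exact (hexp x).symm
    exact h2
  · have h := integral_fintype_prod_eq_pow (𝕜 := ℝ) (ι := Fin n) (fun x : ℝ => Real.exp (c * x)) (μ := volume)
    simp only [Fintype.card_fin] at h
    calc ∫ x : Fin n → ℝ, Real.exp (c * ∑ i, x i) ∂(Measure.pi fun _ => Lap1 b)
        = ∫ x : Fin n → ℝ, ∏ i, Real.exp (c * x i) := by
          simp_rw [hexp]; rfl
      _ = (∫ x, Real.exp (c * x) ∂(Lap1 b)) ^ n := h

end LapAux

open LapAux ProbabilityTheory in
set_option maxHeartbeats 1000000 in
/-- Bernstein-type tail bound for a sum of `n` i.i.d. centered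
Laplace random variables with scale `b`: for every `t ≥ 0`,
`Pr[|Σᵢ Xᵢ| ≥ t] ≤ 2 exp(− t² / (2(4nb² + 2bt)))`. -/
theorem laplace_sum_bernstein_tail (b : ℝ) (hb : 0 < b) (n : ℕ) (t : ℝ) (ht : 0 ≤ t) :
    (Measure.pi (fun _ : Fin n => Lap1 b)) {x | t ≤ |∑ i, x i|}
      ≤ ENNReal.ofReal (2 * Real.exp (-(t ^ 2) / (2 * (4 * n * b ^ 2 + 2 * b * t)))) := by
  haveI : IsProbabilityMeasure (Lap1 b) := lap1_prob hb
  set μ : Measure (Fin n → ℝ) := Measure.pi fun _ => Lap1 b with hμ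
  haveI : IsProbabilityMeasure μ := by rw [hμ]; infer_instance
  rcases eq_or_lt_of_le ht with ht0 | htpos
  · -- t = 0
    subst ht0
    have h1 : μ {x : Fin n → ℝ | (0:ℝ) ≤ |∑ i, x i|} ≤ 1 := prob_le_one
    refine h1.trans ?_
    rw [show -((0:ℝ) ^ 2) / (2 * (4 * n * b ^ 2 + 2 * b * 0)) = 0 by simp]
    rw [Real.exp_zero, mul_one]
    exact le_trans (by norm_num) (le_refl (ENNReal.ofReal 2))
  · rcases Nat.eq_zero_or_pos n with hn | hn
    · subst hn
      have : {x : Fin 0 → ℝ | t ≤ |∑ i, x i|} = ∅ := by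
        ext x
        simp only [Set.mem_setOf_eq, Set.mem_empty_iff_false, iff_false, not_le,
          Finset.univ_eq_empty, Finset.sum_empty, abs_zero]
        exact htpos
      rw [this]
      simp
    · -- main case
      set D : ℝ := 4 * n * b ^ 2 + 2 * b * t with hD
      have hn1 : (1:ℝ) ≤ n := by exact_mod_cast hn
      have hDpos : 0 < D := by
        have : (0:ℝ) < 4 * n * b ^ 2 := by positivity
        nlinarith
      set lam : ℝ := t / D with hlam
      have hlampos : 0 < lam := div_pos htpos hDpos
      have hblam : b * lam ≤ 1 / 2 := by
        rw [hlam, ← mul_div_assoc, div_le_iff₀ hDpos]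
        nlinarith
      have habs1 : b * |lam| ≤ 1 / 2 := by rwa [abs_of_pos hlampos]
      have habs2 : b * |(-lam)| ≤ 1 / 2 := by rwa [abs_neg, abs_of_pos hlampos]
      obtain ⟨hint1, hmgf1⟩ := lap1_mgf b lam hb habs1
      obtain ⟨hint2, hmgf2⟩ := lap1_mgf b (-lam) hb habs2
      obtain ⟨hpint1, hpval1⟩ := lap1_pi_exp b hb n lam hint1
      obtain ⟨hpint2, hpval2⟩ := lap1_pi_exp b hb n (-lam) hint2
      rw [← hμ] at hpint1 hpval1 hpint2 hpval2
      have hEnn : 0 ≤ Real.exp (-lam * t) * Real.exp (2 * b ^ 2 * lam ^ 2) ^ n := by positivity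
      have hIbound : (∫ x, Real.exp (lam * x) ∂(Lap1 b)) ^ n
          ≤ Real.exp (2 * b ^ 2 * lam ^ 2) ^ n :=
        pow_le_pow_left₀ (integral_nonneg fun x => (Real.exp_pos _).le) hmgf1 n
      have hIbound2 : (∫ x, Real.exp ((-lam) * x) ∂(Lap1 b)) ^ n
          ≤ Real.exp (2 * b ^ 2 * lam ^ 2) ^ n := by
        refine pow_le_pow_left₀ (integral_nonneg fun x => (Real.exp_pos _).le) ?_ n
        refine hmgf2.trans_eq ?_
        congr 1; ring
      -- upper tail
      have hub : (μ {x : Fin n → ℝ | t ≤ ∑ i, x i}).toReal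
          ≤ Real.exp (-lam * t) * Real.exp (2 * b ^ 2 * lam ^ 2) ^ n := by
        have h := measure_ge_le_exp_mul_mgf (X := fun x : Fin n → ℝ => ∑ i, x i) (μ := μ)
          (t := lam) t hlampos.le hpint1
        refine h.trans ?_
        refine mul_le_mul_of_nonneg_left ?_ (Real.exp_pos _).le
        rw [ProbabilityTheory.mgf, hpval1]
        exact hIbound
      -- lower tail
      have hlb : (μ {x : Fin n → ℝ | t ≤ -∑ i, x i}).toReal
          ≤ Real.exp (-lam * t) * Real.exp (2 * b ^ 2 * lam ^ 2) ^ n := by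
        have heq : (fun x : Fin n → ℝ => Real.exp (lam * -∑ i, x i))
            = fun x : Fin n → ℝ => Real.exp (-lam * ∑ i, x i) := by
          funext x; congr 1; ring
        have hpint2' : Integrable (fun x : Fin n → ℝ => Real.exp (lam * -∑ i, x i)) μ := by
          rw [heq]; exact hpint2
        have h := measure_ge_le_exp_mul_mgf (X := fun x : Fin n → ℝ => -∑ i, x i) (μ := μ)
          (t := lam) t hlampos.le hpint2'
        refine h.trans ?_
        refine mul_le_mul_of_nonneg_left ?_ (Real.exp_pos _).le
        rw [ProbabilityTheory.mgf]
        have : ∫ x, Real.exp (lam * -∑ i, x i) ∂μ = ∫ x : Fin n → ℝ, Real.exp (-lam * ∑ i, x i) ∂μ := by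
          rw [heq]
        rw [this, hpval2]
        exact hIbound2
      -- combine
      have hsub : {x : Fin n → ℝ | t ≤ |∑ i, x i|}
          ⊆ {x : Fin n → ℝ | t ≤ ∑ i, x i} ∪ {x : Fin n → ℝ | t ≤ -∑ i, x i} := by
        intro x hx
        have hx' : t ≤ |∑ i, x i| := hx
        rcases le_abs.mp hx' with h | h
        · exact Or.inl h
        · exact Or.inr h
      have hEexp : Real.exp (-lam * t) * Real.exp (2 * b ^ 2 * lam ^ 2) ^ n
          ≤ Real.exp (-(t ^ 2) / (2 * D)) := by
        rw [← Real.exp_nat_mul, ← Real.exp_add]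
        apply Real.exp_le_exp.mpr
        rw [hlam, hD, ← sub_nonneg]
        have hDne : (4 * (n:ℝ) * b ^ 2 + 2 * b * t) ≠ 0 := by
          have := hDpos; rw [hD] at this; exact this.ne'
        have expand : -(t ^ 2) / (2 * (4 * (n:ℝ) * b ^ 2 + 2 * b * t))
            - (-(t / (4 * (n:ℝ) * b ^ 2 + 2 * b * t)) * t
              + (n:ℝ) * (2 * b ^ 2 * (t / (4 * (n:ℝ) * b ^ 2 + 2 * b * t)) ^ 2))
            = t ^ 2 * (2 * b * t) / (2 * (4 * (n:ℝ) * b ^ 2 + 2 * b * t) ^ 2) := by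
          field_simp
          ring
        rw [expand]
        positivity
      calc μ {x : Fin n → ℝ | t ≤ |∑ i, x i|}
          ≤ μ ({x : Fin n → ℝ | t ≤ ∑ i, x i} ∪ {x : Fin n → ℝ | t ≤ -∑ i, x i}) :=
            measure_mono hsub
        _ ≤ μ {x : Fin n → ℝ | t ≤ ∑ i, x i} + μ {x : Fin n → ℝ | t ≤ -∑ i, x i} :=
            measure_union_le _ _
        _ ≤ ENNReal.ofReal (Real.exp (-lam * t) * Real.exp (2 * b ^ 2 * lam ^ 2) ^ n)
            + ENNReal.ofReal (Real.exp (-lam * t) * Real.exp (2 * b ^ 2 * lam ^ 2) ^ n) := by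
            gcongr
            · rw [← ENNReal.ofReal_toReal (measure_ne_top μ _)]
              exact ENNReal.ofReal_le_ofReal hub
            · rw [← ENNReal.ofReal_toReal (measure_ne_top μ _)]
              exact ENNReal.ofReal_le_ofReal hlb
        _ = ENNReal.ofReal (Real.exp (-lam * t) * Real.exp (2 * b ^ 2 * lam ^ 2) ^ n
              + Real.exp (-lam * t) * Real.exp (2 * b ^ 2 * lam ^ 2) ^ n) :=
            (ENNReal.ofReal_add hEnn hEnn).symm
        _ ≤ ENNReal.ofReal (2 * Real.exp (-(t ^ 2) / (2 * D))) := by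
            apply ENNReal.ofReal_le_ofReal
            linarith [hEexp]
end

section
/- Consider the following successive-elimination setup. Let X be a set (of contexts), A a finite set (of actions), and f*: X × A → ℝ. For each x ∈ X fix a*(x) ∈ argmax_{a∈A} f*(x,a). For each epoch τ = 1, 2, …, let f̂_τ^a: X → ℝ and Δ_τ^a: X → ℝ≥0 be functions satisfying |f̂_τ^a(x) − f*(x,a)| ≤ Δ_τ^a(x) for all x ∈ X and a ∈ A. Define the active sets recursively by A₀(x) = A and A_τ(x) = { a ∈ A_{τ−1}(x) : f̂_τ^a(x) + Δ_τ^a(x) ≥ max_{a′ ∈ A_{τ−1}(x)} ( f̂_τ^{a′}(x) − Δ_τ^{a′}(x) ) }. Then for every epoch τ ≥ 0 and every x ∈ X, the optimal action is never eliminated: a*(x) ∈ A_τ(x). -/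
theorem sub_le_add_of_abs_sub_le_of_le {u v fu fv du dv : ℝ} (hu : |u - fu| ≤ du)
    (hv : |v - fv| ≤ dv) (h : fu ≤ fv) : u - du ≤ v + dv := by
  linarith [(abs_le.mp hu).2, (abs_le.mp hv).1]

theorem optimal_action_never_eliminated_general
    {X : Type*} {A : Type*} [Fintype A]
    (fstar : X → A → ℝ) (astar : X → A)
    (hastar : ∀ x a, fstar x a ≤ fstar x (astar x))
    (fhat : ℕ → A → X → ℝ) (Δ : ℕ → A → X → ℝ)
    (hvalid : ∀ τ, 1 ≤ τ → ∀ a x, |fhat τ a x - fstar x a| ≤ Δ τ a x)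
    (Asets : ℕ → X → Finset A)
    (hA0 : ∀ x, Asets 0 x = Finset.univ)
    (hAstep : ∀ τ x a, a ∈ Asets (τ + 1) x ↔
      a ∈ Asets τ x ∧
        ∀ a' ∈ Asets τ x,
          fhat (τ + 1) a' x - Δ (τ + 1) a' x ≤ fhat (τ + 1) a x + Δ (τ + 1) a x) :
    ∀ τ x, astar x ∈ Asets τ x := by
  intro τ x
  induction τ with
  | zero => simp [hA0]
  | succ τ ih =>
    have hvalid' := hvalid (τ + 1) τ.succ_pos
    exact (hAstep τ x _).2 ⟨ih, fun a' _ ↦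
      sub_le_add_of_abs_sub_le_of_le (hvalid' a' x) (hvalid' _ x) (hastar x a')⟩

/-- in the successive-elimination framework, if every confidence
interval is valid (`|f̂_τ^a(x) − f*(x,a)| ≤ Δ_τ^a(x)` for all epochs `τ ≥ 1`), and the
active sets satisfy `A₀(x) = A` and
`A_τ(x) = {a ∈ A_{τ-1}(x) : f̂_τ^a(x) + Δ_τ^a(x) ≥ max_{a' ∈ A_{τ-1}(x)} (f̂_τ^{a'}(x) − Δ_τ^{a'}(x))}`,
then the optimal action `a*(x)` is never eliminated: `a*(x) ∈ A_τ(x)` for all `τ` and `x`. -/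
theorem optimal_action_never_eliminated
    {X : Type*} {A : Type*} [Fintype A] [DecidableEq A]
    (fstar : X → A → ℝ) (astar : X → A)
    (hastar : ∀ x a, fstar x a ≤ fstar x (astar x))
    (fhat : ℕ → A → X → ℝ) (Δ : ℕ → A → X → ℝ)
    (hΔ : ∀ τ, 1 ≤ τ → ∀ a x, 0 ≤ Δ τ a x)
    (hvalid : ∀ τ, 1 ≤ τ → ∀ a x, |fhat τ a x - fstar x a| ≤ Δ τ a x)
    (Asets : ℕ → X → Finset A)
    (hA0 : ∀ x, Asets 0 x = Finset.univ)
    (hAstep : ∀ τ x a, a ∈ Asets (τ + 1) x ↔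
      a ∈ Asets τ x ∧
        ∀ a' ∈ Asets τ x,
          fhat (τ + 1) a' x - Δ (τ + 1) a' x ≤ fhat (τ + 1) a x + Δ (τ + 1) a x) :
    ∀ τ x, astar x ∈ Asets τ x :=
  optimal_action_never_eliminated_general fstar astar hastar fhat Δ hvalid Asets hA0 hAstep
end
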